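/- Let 0 ≤ α < n, let 𝒟 be a dyadic grid on ℝⁿ, let I ∈ 𝒟, and for k ≥ 1 let A_k := π^{(k)}I be the k-fold dyadic parent of I, so that ℓ(A_k) = 2^k ℓ(I) and I ⊆ A_k. Then for every positive locally finite Borel measure ω on ℝⁿ: Σ_{k=1}^∞ [ℓ(I)^{n−α} / ℓ(A_k)^{2(n−α)}] · ω(A_k ∖ I) ≤ C · 𝒫^α(I, 1_{ℝⁿ∖I} ω), where C depends only on n and α. -/

import Mathlib

/-!
Write `β = n - α`. The `k`-th coefficient `ℓ(I)^β / ℓ(A_{k+1})^{2β} = (ℓ(I) / ℓ(A_{k+1})²)^β`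
decays geometrically in `k`, with ratio `4^{-β} < 1`. For `x ∉ I`, let `m` be the first index
with `x ∈ A_{m+1}`. Then `|x - c_I| ≤ √n ℓ(A_{m+1})`, so the Poisson kernel at `x` dominates the
`m`-th coefficient up to the factor `(1 + √n)^{2β}`, and summing the geometric tail from `m`
bounds the integrand `Σ_k (k-th coefficient) 1_{A_{k+1} ∖ I}(x)` by a constant times the kernel.
-/
open MeasureTheory
open scoped ENNReal NNReal

noncomputable section

/-- An axis-parallel half-open cube in `ℝⁿ`, given by its corner `a` and side length `l`. -/
structure QCube (n : ℕ) where
  a : Fin n → ℝ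
  l : ℝ

/-- The half-open cube as a subset of `ℝⁿ`. -/
def QCube.pts {n : ℕ} (Q : QCube n) : Set (EuclideanSpace ℝ (Fin n)) :=
  {x | ∀ i, Q.a i ≤ x i ∧ x i < Q.a i + Q.l}

/-- The center of a cube. -/
def QCube.center {n : ℕ} (Q : QCube n) : EuclideanSpace ℝ (Fin n) :=
  (EuclideanSpace.equiv (Fin n) ℝ).symm fun i => Q.a i + Q.l / 2

/-- The dyadic grid on `ℝⁿ` obtained by translating the standard grid by `t`. -/
def dyadicGrid {n : ℕ} (t : Fin n → ℝ) : Set (QCube n) :=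
  {Q | ∃ (k : ℤ) (m : Fin n → ℤ),
    Q = ⟨fun i => t i + (2:ℝ) ^ (-k) * (m i : ℝ), (2:ℝ) ^ (-k)⟩}

/-- The reproducing `α`-fractional Poisson integral
`𝒫^α(Q,μ) = ∫ (ℓ(Q)/(ℓ(Q)+|x−c_Q|)²)^{n−α} dμ(x)`, with side `t` and center `z`. -/
def reproPoisson {n : ℕ} (α t : ℝ) (z : EuclideanSpace ℝ (Fin n))
    (μ : Measure (EuclideanSpace ℝ (Fin n))) : ℝ≥0∞ :=
  ∫⁻ x, ENNReal.ofReal ((t / (t + dist x z) ^ 2) ^ ((n : ℝ) - α)) ∂μ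


namespace QCube

variable {n : ℕ} (Q : QCube n)

theorem measurableSet_pts : MeasurableSet Q.pts := by
  have hcoord (i : Fin n) : Measurable fun x : EuclideanSpace ℝ (Fin n) => x i :=
    (EuclideanSpace.proj i).continuous.measurable
  have hpts : Q.pts = ⋂ i, {x | Q.a i ≤ x i} ∩ {x | x i < Q.a i + Q.l} := by
    ext; simp [pts]
  rw [hpts]
  exact .iInter fun i => (measurableSet_le measurable_const (hcoord i)).inter
    (measurableSet_lt (hcoord i) measurable_const)

theorem center_mem_pts (hl : 0 < Q.l) : Q.center ∈ Q.pts := fun i => by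
  change Q.a i ≤ Q.a i + Q.l / 2 ∧ Q.a i + Q.l / 2 < Q.a i + Q.l
  constructor <;> linarith

theorem dist_le_of_mem_pts (hl : 0 ≤ Q.l) {x y : EuclideanSpace ℝ (Fin n)} (hx : x ∈ Q.pts)
    (hy : y ∈ Q.pts) : dist x y ≤ √n * Q.l := by
  have hcoord (i : Fin n) : dist (x i) (y i) ^ 2 ≤ Q.l ^ 2 := by
    rw [Real.dist_eq, sq_abs]
    exact sq_le_sq' (by linarith [(hx i).1, (hy i).2]) (by linarith [(hx i).2, (hy i).1])
  calc dist x y = √(∑ i, dist (x i) (y i) ^ 2) := EuclideanSpace.dist_eq x y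
    _ ≤ √(∑ _i : Fin n, Q.l ^ 2) :=
      Real.sqrt_le_sqrt (Finset.sum_le_sum fun i _ => hcoord i)
    _ = √n * Q.l := by simp [Real.sqrt_sq hl]

theorem l_pos_of_mem_dyadicGrid {t : Fin n → ℝ} (hQ : Q ∈ dyadicGrid t) : 0 < Q.l := by
  obtain ⟨k, m, rfl⟩ := hQ
  exact zpow_pos two_pos _

end QCube

theorem ENNReal.tsum_le_of_le_geometric_from {f : ℕ → ℝ≥0∞} {a r : ℝ≥0∞} {m : ℕ}
    (hlt : ∀ k < m, f k = 0) (hge : ∀ j, f (j + m) ≤ a * r ^ j) :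
    ∑' k, f k ≤ a * (1 - r)⁻¹ := by
  have hsupp : Function.support f ⊆ Set.range (· + m) := fun k hk =>
    ⟨k - m, Nat.sub_add_cancel (not_lt.1 fun h => hk (hlt k h))⟩
  calc ∑' k, f k = ∑' j, f (j + m) := ((add_left_injective m).tsum_eq hsupp).symm
    _ ≤ ∑' j, a * r ^ j := ENNReal.tsum_le_tsum hge
    _ = a * (1 - r)⁻¹ := by rw [ENNReal.tsum_mul_left, ENNReal.tsum_geometric]

theorem ENNReal.tsum_indicator_le_of_geometric {X : Type*} (D : ℕ → Set X) {c : ℕ → ℝ≥0∞}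
    {r : ℝ≥0∞} (hc : ∀ k j, c (j + k) = r ^ j * c k) {x : X} {B : ℝ≥0∞}
    (hB : ∀ k, x ∈ D k → c k ≤ B) :
    ∑' k, (D k).indicator (fun _ => c k) x ≤ B * (1 - r)⁻¹ := by
  classical
  by_cases hx : ∃ k, x ∈ D k
  · refine ENNReal.tsum_le_of_le_geometric_from (m := Nat.find hx)
      (fun k hk => Set.indicator_of_notMem (Nat.find_min hx hk) _) fun j => ?_
    calc (D (j + Nat.find hx)).indicator (fun _ => c (j + Nat.find hx)) x
        ≤ c (j + Nat.find hx) := Set.indicator_le_self' (fun _ _ => zero_le) x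
      _ = r ^ j * c (Nat.find hx) := hc _ j
      _ ≤ B * r ^ j := by rw [mul_comm]; gcongr; exact hB _ (Nat.find_spec hx)
  · push Not at hx
    simp [Set.indicator_of_notMem (hx _)]

theorem Real.div_sq_le_of_le_mul {ℓ L s d : ℝ} (hℓ : 0 < ℓ) (hd : 0 ≤ d)
    (hdL : d ≤ s * L) (hℓL : ℓ ≤ L) : ℓ / L ^ 2 ≤ (1 + s) ^ 2 * (ℓ / (ℓ + d) ^ 2) := by
  have hsum : ℓ + d ≤ (1 + s) * L := by linarith
  have hL : 0 < L := hℓ.trans_le hℓL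
  rw [mul_div_assoc', div_le_div_iff₀ (by positivity) (by positivity)]
  calc ℓ * (ℓ + d) ^ 2 ≤ ℓ * ((1 + s) * L) ^ 2 := by gcongr
    _ = (1 + s) ^ 2 * ℓ * L ^ 2 := by ring

theorem Real.rpow_div_rpow_two_mul {x y : ℝ} (hx : 0 ≤ x) (hy : 0 ≤ y) (z : ℝ) :
    x ^ z / y ^ (2 * z) = (x / y ^ 2) ^ z := by
  rw [Real.div_rpow hx (by positivity), Real.rpow_mul hy, Real.rpow_two]

theorem Real.div_sq_two_pow_add_mul (ℓ : ℝ) (k j : ℕ) :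
    ℓ / (2 ^ (j + k) * ℓ) ^ 2 = (1 / 4) ^ j * (ℓ / (2 ^ k * ℓ) ^ 2) := by
  rcases eq_or_ne ℓ 0 with rfl | hℓ
  · simp
  have h4 : (4 : ℝ) ^ j = (2 ^ j) ^ 2 := by rw [← pow_mul, mul_comm, pow_mul]; norm_num
  rw [one_div_pow, h4]
  field_simp
  ring

theorem Real.rpow_div_rpow_two_pow_add_mul {ℓ : ℝ} (hℓ : 0 ≤ ℓ) (β : ℝ) (k j : ℕ) :
    ℓ ^ β / (2 ^ (j + k) * ℓ) ^ (2 * β) = ((1 / 4) ^ β) ^ j * (ℓ ^ β / (2 ^ k * ℓ) ^ (2 * β)) := by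
  rw [Real.rpow_div_rpow_two_mul hℓ (by positivity), Real.rpow_div_rpow_two_mul hℓ (by positivity),
    Real.div_sq_two_pow_add_mul, Real.mul_rpow (by positivity) (by positivity),
    Real.rpow_pow_comm (by norm_num)]

theorem QCube.rpow_div_rpow_two_mul_le {n : ℕ} {J Q : QCube n} (hJ : 0 < J.l)
    (hJQ : J.pts ⊆ Q.pts) (hl : J.l ≤ Q.l) {x : EuclideanSpace ℝ (Fin n)} (hx : x ∈ Q.pts)
    {β : ℝ} (hβ : 0 ≤ β) :
    J.l ^ β / Q.l ^ (2 * β) ≤ ((1 + √n) ^ 2) ^ β * (J.l / (J.l + dist x J.center) ^ 2) ^ β := by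
  have hdist : dist x J.center ≤ √n * Q.l :=
    Q.dist_le_of_mem_pts (hJ.le.trans hl) hx (hJQ (J.center_mem_pts hJ))
  rw [Real.rpow_div_rpow_two_mul hJ.le (hJ.le.trans hl), ← Real.mul_rpow (by positivity)
    (by positivity)]
  exact Real.rpow_le_rpow (by positivity) (Real.div_sq_le_of_le_mul hJ dist_nonneg hdist hl) hβ

theorem MeasureTheory.tsum_mul_measure_le_lintegral {X : Type*} [MeasurableSpace X]
    (μ : Measure X) {D : ℕ → Set X} (hD : ∀ k, MeasurableSet (D k)) (c : ℕ → ℝ≥0∞)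
    {g : X → ℝ≥0∞} (hg : ∀ x, ∑' k, (D k).indicator (fun _ => c k) x ≤ g x) :
    ∑' k, c k * μ (D k) ≤ ∫⁻ x, g x ∂μ :=
  calc ∑' k, c k * μ (D k) = ∑' k, ∫⁻ x, (D k).indicator (fun _ => c k) x ∂μ := by
        simp only [lintegral_indicator_const (hD _)]
    _ = ∫⁻ x, ∑' k, (D k).indicator (fun _ => c k) x ∂μ :=
        (lintegral_tsum fun k => (measurable_const.indicator (hD k)).aemeasurable).symm
    _ ≤ ∫⁻ x, g x ∂μ := lintegral_mono hg

theorem statement17_general (n : ℕ) (α : ℝ) (hαn : α < n) :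
    ∃ C : ℝ, 0 < C ∧
      ∀ (t : Fin n → ℝ) (I : QCube n), I ∈ dyadicGrid t →
      ∀ A : ℕ → QCube n,
        (∀ k : ℕ, A k ∈ dyadicGrid t ∧ I.pts ⊆ (A k).pts ∧ (A k).l = 2 ^ k * I.l) →
      ∀ ω : Measure (EuclideanSpace ℝ (Fin n)), IsLocallyFiniteMeasure ω →
        (∑' k : ℕ,
            ENNReal.ofReal (I.l ^ ((n : ℝ) - α) / (A (k + 1)).l ^ (2 * ((n : ℝ) - α)))
              * ω ((A (k + 1)).pts \ I.pts))
          ≤ ENNReal.ofReal C * reproPoisson α I.l I.center (ω.restrict I.ptsᶜ) := by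
  set β := (n : ℝ) - α
  have hβ : 0 < β := sub_pos.2 hαn
  set ρ : ℝ := (1 / 4) ^ β
  have hρ : ρ < 1 := Real.rpow_lt_one (by norm_num) (by norm_num) hβ
  set K : ℝ := ((1 + √n) ^ 2) ^ β
  refine ⟨K * (1 - ρ)⁻¹, mul_pos (by positivity) (inv_pos.2 (sub_pos.2 hρ)), ?_⟩
  intro t I hI A hA ω _
  have hℓ := I.l_pos_of_mem_dyadicGrid hI
  set c : ℕ → ℝ≥0∞ := fun k => ENNReal.ofReal (I.l ^ β / (A (k + 1)).l ^ (2 * β))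
  have hc (k j : ℕ) : c (j + k) = ENNReal.ofReal ρ ^ j * c k := by
    simp only [c]
    rw [(hA _).2.2, (hA _).2.2, add_assoc, Real.rpow_div_rpow_two_pow_add_mul hℓ.le,
      ENNReal.ofReal_mul (by positivity), ENNReal.ofReal_pow (by positivity)]
  have hgeom : ENNReal.ofReal (K * (1 - ρ)⁻¹) = ENNReal.ofReal K * (1 - ENNReal.ofReal ρ)⁻¹ := by
    rw [ENNReal.ofReal_mul (by positivity), ENNReal.ofReal_inv_of_pos (sub_pos.2 hρ),
      ENNReal.ofReal_sub _ (by positivity), ENNReal.ofReal_one]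
  simp_rw [← Measure.restrict_eq_self ω (Set.sdiff_subset_compl _ I.pts)]
  refine (tsum_mul_measure_le_lintegral _ (fun k => (A (k + 1)).measurableSet_pts.diff
    I.measurableSet_pts) c fun x => ?_).trans_eq (lintegral_const_mul' _ _ ENNReal.ofReal_ne_top)
  rw [hgeom, mul_right_comm]
  refine ENNReal.tsum_indicator_le_of_geometric _ hc fun k hx => ?_
  rw [← ENNReal.ofReal_mul (by positivity)]
  have hl : I.l ≤ (A (k + 1)).l := by
    rw [(hA _).2.2]; exact le_mul_of_one_le_left hℓ.le (one_le_pow₀ one_le_two)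
  exact ENNReal.ofReal_le_ofReal
    (QCube.rpow_div_rpow_two_mul_le hℓ (hA _).2.1 hl hx.1 hβ.le)

/-- For `I ∈ 𝒟` with `k`-fold dyadic parents `A_k = π^{(k)}I`:
`Σ_{k=1}^∞ [ℓ(I)^{n−α}/ℓ(A_k)^{2(n−α)}] ω(A_k ∖ I) ≤ C 𝒫^α(I, 1_{ℝⁿ∖I}ω)`,
with `C` depending only on `n` and `α`. -/
theorem statement17 (n : ℕ) (α : ℝ) (hn : 1 ≤ n) (hα0 : 0 ≤ α) (hαn : α < n) :
    ∃ C : ℝ, 0 < C ∧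
      ∀ (t : Fin n → ℝ) (I : QCube n), I ∈ dyadicGrid t →
      ∀ A : ℕ → QCube n,
        (∀ k : ℕ, A k ∈ dyadicGrid t ∧ I.pts ⊆ (A k).pts ∧ (A k).l = 2 ^ k * I.l) →
      ∀ ω : Measure (EuclideanSpace ℝ (Fin n)), IsLocallyFiniteMeasure ω →
        (∑' k : ℕ,
            ENNReal.ofReal (I.l ^ ((n : ℝ) - α) / (A (k + 1)).l ^ (2 * ((n : ℝ) - α)))
              * ω ((A (k + 1)).pts \ I.pts))
          ≤ ENNReal.ofReal C * reproPoisson α I.l I.center (ω.restrict I.ptsᶜ) :=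
  statement17_general n α hαn
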